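/- Let n be an odd positive integer and let s, s' be integers with 1 ≤ s < s' ≤ (n − 1)/2. Then the invariant subspaces V_s and V_{s'} are inequivalent: there is no ℂ-linear bijection φ : V_s → V_{s'} satisfying φ(λ_t u) = λ_t(φ(u)) for all t ∈ ZMod n and all u ∈ V_s. -/

import Mathlib

/-!
The composite `λ_0 ∘ λ_1` is translation by `2`. It scales `f_s` by `ω^{2s}`, while on `V_{s'}`
its eigenvectors are the multiples of the linearly independent characters `f_{s'}`, `f_{-s'}`,
with eigenvalues `ω^{2s'}`, `ω^{-2s'}`. For odd `n` and `0 < s < s' < n/2` these three numbers are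
distinct, so an intertwiner sends `f_s` to `0` and cannot be injective.
-/

/-- The regular representation of the dihedral quandle `R_n = Quandle.dihedral n`
(`ZMod n` with `x ◃ y = 2y - x`) on functions `ZMod n → ℂ`:
`(λ_t f)(x) = f (2t - x)`. -/
def lam (n : ℕ) (t : ZMod n) (f : ZMod n → ℂ) : ZMod n → ℂ :=
  fun x => f (2 * t - x)

/-- `ω = exp(2πi/n)`. -/
noncomputable def dihedralOmega (n : ℕ) : ℂ :=
  Complex.exp (2 * Real.pi * Complex.I / n)

/-- The character `f_s : ZMod n → ℂ`, `f_s(x) = ω^{s·x.val}`. -/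
noncomputable def chi (n : ℕ) (s : ℤ) : ZMod n → ℂ :=
  fun x => dihedralOmega n ^ (s * (x.val : ℤ))

/-- `V_s`: the `ℂ`-linear span of `{f_s, f_{-s}}` in `ZMod n → ℂ`. -/
noncomputable def Vsub (n : ℕ) (s : ℤ) : Submodule ℂ (ZMod n → ℂ) :=
  Submodule.span ℂ {chi n s, chi n (-s)}

open Submodule

theorem AddChar.eq_zero_of_mem_span_pair_of_apply_add_eq_mul {G R : Type*} [AddCommGroup G]
    [Finite G] [RCLike R] {ψ₁ ψ₂ : AddChar G R} (hψ : ψ₁ ≠ ψ₂) {y : G} {c : R}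
    (h₁ : ψ₁ y ≠ c) (h₂ : ψ₂ y ≠ c) {g : G → R} (hg : g ∈ span R {⇑ψ₁, ⇑ψ₂})
    (hgy : ∀ x, g (x + y) = c * g x) : g = 0 := by
  obtain ⟨a, b, rfl⟩ := mem_span_pair.1 hg
  have hind : LinearIndepOn R (fun ψ : AddChar G R => (ψ : G → R)) {ψ₁, ψ₂} :=
    (AddChar.linearIndependent G R).linearIndepOn _
  have hcomb : (a * (ψ₁ y - c)) • ⇑ψ₁ + (b * (ψ₂ y - c)) • ⇑ψ₂ = 0 := by
    funext x
    have := hgy x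
    simp only [Pi.add_apply, Pi.smul_apply, smul_eq_mul, AddChar.map_add_eq_mul,
      Pi.zero_apply] at this ⊢
    linear_combination this
  obtain ⟨ha, hb⟩ := (LinearIndepOn.pair_iff _ hψ).1 hind _ _ hcomb
  rw [(mul_eq_zero.1 ha).resolve_right (sub_ne_zero.2 h₁),
    (mul_eq_zero.1 hb).resolve_right (sub_ne_zero.2 h₂), zero_smul, zero_smul, add_zero]

lemma ZMod.intCast_ne_intCast_of_lt_of_lt {n : ℕ} {a b : ℤ} (hab : a < b) (hba : b < a + n) :
    (a : ZMod n) ≠ b := by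
  rw [Ne, ZMod.intCast_eq_intCast_iff_dvd_sub]
  intro hdvd
  have := Int.le_of_dvd (by omega) hdvd
  omega

lemma lam_lam {n : ℕ} (t t' : ZMod n) (f : ZMod n → ℂ) :
    lam n t (lam n t' f) = fun x => f (x + 2 * (t' - t)) := by
  funext x
  simp only [lam]
  ring_nf

section Characters

variable {n : ℕ} [NeZero n]

lemma isPrimitiveRoot_dihedralOmega : IsPrimitiveRoot (dihedralOmega n) n := by
  simpa [dihedralOmega] using Complex.isPrimitiveRoot_exp n (NeZero.ne n)

lemma dihedralOmega_zpow_eq_zpow_iff {a b : ℤ} :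
    dihedralOmega n ^ a = dihedralOmega n ^ b ↔ (a : ZMod n) = b := by
  have hω : dihedralOmega n ≠ 0 := Complex.exp_ne_zero _
  rw [ZMod.intCast_eq_intCast_iff_dvd_sub, ← isPrimitiveRoot_dihedralOmega.zpow_eq_one_iff_dvd,
    zpow_sub₀ hω, div_eq_one_iff_eq (zpow_ne_zero _ hω), eq_comm]

lemma chi_intCast (s k : ℤ) : chi n s k = dihedralOmega n ^ (s * k) := by
  rw [chi, dihedralOmega_zpow_eq_zpow_iff]
  push_cast
  rw [ZMod.natCast_val, ZMod.cast_id]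

variable (n) in
noncomputable def chiChar (s : ℤ) : AddChar (ZMod n) ℂ :=
  AddChar.zmodChar n (ζ := dihedralOmega n ^ s) <| by
    rw [← zpow_natCast, ← zpow_mul, mul_comm, zpow_mul, zpow_natCast,
      isPrimitiveRoot_dihedralOmega.pow_eq_one, one_zpow]

lemma coe_chiChar (s : ℤ) : ⇑(chiChar n s) = chi n s := by
  funext x
  rw [chiChar, AddChar.zmodChar_apply, chi, zpow_mul, zpow_natCast]

lemma chi_add_apply (s : ℤ) (x y : ZMod n) : chi n s (x + y) = chi n s x * chi n s y := by
  simp only [← coe_chiChar, AddChar.map_add_eq_mul]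

lemma chi_neg_apply (s : ℤ) (x : ZMod n) : chi n (-s) x = chi n s (-x) := by
  rw [← coe_chiChar s, AddChar.map_neg_eq_inv, coe_chiChar, chi, chi, neg_mul, zpow_neg]

lemma chi_ne_zero (s : ℤ) : chi n s ≠ 0 :=
  coe_chiChar (n := n) s ▸ AddChar.coe_ne_zero _

lemma lam_chi (s : ℤ) (t : ZMod n) : lam n t (chi n s) = chi n s (2 * t) • chi n (-s) := by
  funext x
  rw [lam, sub_eq_add_neg, chi_add_apply, Pi.smul_apply, smul_eq_mul, chi_neg_apply]

lemma lam_mem_Vsub {s : ℤ} {f : ZMod n → ℂ} (hf : f ∈ Vsub n s) (t : ZMod n) :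
    lam n t f ∈ Vsub n s := by
  have hspan : Vsub n s ≤ (Vsub n s).comap (LinearMap.funLeft ℂ ℂ (fun x => 2 * t - x)) := by
    refine span_le.2 ?_
    rintro _ (rfl | rfl)
    · change lam n t (chi n s) ∈ Vsub n s
      rw [lam_chi]
      exact smul_mem _ _ (subset_span (Set.mem_insert_of_mem _ rfl))
    · change lam n t (chi n (-s)) ∈ Vsub n s
      rw [lam_chi, neg_neg]
      exact smul_mem _ _ (subset_span (Set.mem_insert _ _))
  exact hspan hf

lemma chi_one_ne_chi_one {a b : ℤ} (hab : a < b) (hba : b < a + n) : chi n a 1 ≠ chi n b 1 := by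
  rw [← Int.cast_one, chi_intCast, chi_intCast, Ne, dihedralOmega_zpow_eq_zpow_iff, mul_one,
    mul_one]
  exact ZMod.intCast_ne_intCast_of_lt_of_lt hab hba

lemma chi_two_ne_chi_two (hn : Odd n) {a b : ℤ} (hab : a < b) (hba : b < a + n) :
    chi n a 2 ≠ chi n b 2 := by
  have h2 : IsUnit (2 : ZMod n) := by
    exact_mod_cast (ZMod.isUnit_iff_coprime 2 n).2 (Nat.coprime_two_left.2 hn)
  rw [← Int.cast_two, chi_intCast, chi_intCast, Ne, dihedralOmega_zpow_eq_zpow_iff]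
  push_cast
  rw [h2.mul_left_inj]
  exact ZMod.intCast_ne_intCast_of_lt_of_lt hab hba

end Characters

theorem Vs_inequivalent_odd_general (n : ℕ) (hodd : Odd n) (s s' : ℤ)
    (hs : 1 ≤ s) (hss' : s < s') (hs' : s' ≤ ((n : ℤ) - 1) / 2) :
    ¬ ∃ φ : ↥(Vsub n s) →ₗ[ℂ] ↥(Vsub n s'),
        Function.Bijective φ ∧
        ∀ (t : ZMod n) (u w : ↥(Vsub n s)),
          (w : ZMod n → ℂ) = lam n t ↑u →
          ((φ w : ↥(Vsub n s')) : ZMod n → ℂ) = lam n t ↑(φ u) := by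
  rintro ⟨φ, ⟨hinj, -⟩, hint⟩
  have : NeZero n := ⟨hodd.pos.ne'⟩
  let u : Vsub n s := ⟨chi n s, subset_span (Set.mem_insert _ _)⟩
  let v : Vsub n s := ⟨lam n 1 u, lam_mem_Vsub u.2 1⟩
  let w : Vsub n s := ⟨lam n 0 v, lam_mem_Vsub v.2 0⟩
  have hw : w = chi n s 2 • u := by
    ext1
    funext x
    simp [w, v, u, lam_lam, chi_add_apply, mul_comm]
  have htrans : ∀ x, (φ u : ZMod n → ℂ) (x + 2) = chi n s 2 * (φ u : ZMod n → ℂ) x := by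
    intro x
    have := congrFun (hint 0 v w rfl) x
    rw [hint 1 u v rfl, lam_lam, hw, map_smul] at this
    simpa using this.symm
  have hφu : (φ u : ZMod n → ℂ) = 0 := by
    refine AddChar.eq_zero_of_mem_span_pair_of_apply_add_eq_mul (ψ₁ := chiChar n s')
      (ψ₂ := chiChar n (-s')) (fun h => ?_) ?_ ?_ ?_ htrans
    · exact chi_one_ne_chi_one (n := n) (a := -s') (b := s') (by omega) (by omega)
        (by simpa only [coe_chiChar] using DFunLike.congr_fun h.symm 1)
    · rw [coe_chiChar]; exact (chi_two_ne_chi_two hodd hss' (by omega)).symm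
    · rw [coe_chiChar]; exact chi_two_ne_chi_two hodd (by omega) (by omega)
    · rw [coe_chiChar, coe_chiChar]; exact (φ u).2
  have hu : u = 0 := hinj (by rw [map_zero]; exact Subtype.ext hφu)
  exact chi_ne_zero s (congrArg Subtype.val hu)

/-- For odd `n` and `1 ≤ s < s' ≤ (n-1)/2`, the invariant subspaces `V_s` and
`V_{s'}` of the regular representation of `R_n` are inequivalent: there is no
`ℂ`-linear bijection `φ : V_s → V_{s'}` intertwining all the operators `λ_t`. -/
theorem Vs_inequivalent_odd (n : ℕ) (hpos : 0 < n) (hodd : Odd n) (s s' : ℤ)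
    (hs : 1 ≤ s) (hss' : s < s') (hs' : s' ≤ ((n : ℤ) - 1) / 2) :
    ¬ ∃ φ : ↥(Vsub n s) →ₗ[ℂ] ↥(Vsub n s'),
        Function.Bijective φ ∧
        ∀ (t : ZMod n) (u w : ↥(Vsub n s)),
          (w : ZMod n → ℂ) = lam n t ↑u →
          ((φ w : ↥(Vsub n s')) : ZMod n → ℂ) = lam n t ↑(φ u) :=
  Vs_inequivalent_odd_general n hodd s s' hs hss' hs'
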